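/- arXiv:1901.01347 — 3 statements merged into one kernel-verified Lean document; each statement's English description precedes it below -/
import Mathlib

section
/- Let T > 0 be a real number, D a natural number, and 0 < λ < 1. For any positive reals l_1, …, l_{D+1} with l_1 + ⋯ + l_{D+1} = T, one has Σ_{i=1}^{D+1} f_λ(l_i) ≤ (D+1) · f_λ(T/(D+1)), where f_λ(x) = (1 − λ^x)/(1 − λ). In particular, the uniform choice l_1 = ⋯ = l_{D+1} = T/(D+1) maximizes Σ_{i=1}^{D+1} f_λ(l_i) over all such partitions. -/
/-- Uniform Writing optimality (Theorem 3): for `0 < λ < 1`, positive interval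
lengths `l 1, …, l (D+1)` summing to `T` satisfy the Jensen bound
`∑ f_λ(l i) ≤ (D+1) · f_λ(T/(D+1))`, where `f_λ(x) = (1 - λ^x)/(1 - λ)`. -/
theorem uniform_writing_optimal (T : ℝ) (hT : 0 < T) (D : ℕ) (lam : ℝ)
    (hlam0 : 0 < lam) (hlam1 : lam < 1)
    (l : Fin (D + 1) → ℝ) (hl : ∀ i, 0 < l i)
    (hsum : ∑ i, l i = T) :
    ∑ i, (1 - lam ^ (l i)) / (1 - lam)
      ≤ ((D : ℝ) + 1) * ((1 - lam ^ (T / ((D : ℝ) + 1))) / (1 - lam)) := by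
  have hD : (0:ℝ) < (D : ℝ) + 1 := by positivity
  have hlamne : (0:ℝ) < 1 - lam := by linarith
  -- key: (D+1) * lam ^ (T/(D+1)) ≤ ∑ lam ^ (l i)
  have key : ((D:ℝ) + 1) * lam ^ (T / ((D:ℝ) + 1)) ≤ ∑ i, lam ^ (l i) := by
    have hjensen := (convexOn_exp).map_sum_le
      (t := Finset.univ) (w := fun _ : Fin (D+1) => 1 / ((D:ℝ)+1))
      (p := fun i => l i * Real.log lam)
      (fun i _ => by positivity)
      (by simp [Finset.sum_const, Finset.card_univ]; field_simp)
      (fun i _ => trivial)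
    have h1 : ∑ i : Fin (D+1), (1 / ((D:ℝ)+1)) • (l i * Real.log lam)
        = (T / ((D:ℝ)+1)) * Real.log lam := by
      simp only [smul_eq_mul]
      rw [← Finset.mul_sum, ← Finset.sum_mul, hsum]
      ring
    rw [h1] at hjensen
    have h2 : ∀ x : ℝ, lam ^ x = Real.exp (x * Real.log lam) := by
      intro x
      rw [Real.rpow_def_of_pos hlam0]; ring_nf
    calc ((D:ℝ) + 1) * lam ^ (T / ((D:ℝ) + 1))
        = ((D:ℝ) + 1) * Real.exp ((T / ((D:ℝ)+1)) * Real.log lam) := by rw [h2]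
      _ ≤ ((D:ℝ) + 1) * ∑ i, (1 / ((D:ℝ)+1)) * Real.exp (l i * Real.log lam) := by
          exact mul_le_mul_of_nonneg_left hjensen (le_of_lt hD)
      _ = ∑ i, lam ^ (l i) := by
          rw [Finset.mul_sum]
          refine Finset.sum_congr rfl fun i _ => ?_
          rw [h2]; field_simp
  have : ∑ i, (1 - lam ^ (l i)) = ((D:ℝ)+1) - ∑ i, lam ^ (l i) := by
    rw [Finset.sum_sub_distrib]
    simp [Finset.card_univ]
  calc ∑ i, (1 - lam ^ (l i)) / (1 - lam)
      = (∑ i, (1 - lam ^ (l i))) / (1 - lam) := by rw [Finset.sum_div]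
    _ ≤ (((D:ℝ)+1) * (1 - lam ^ (T / ((D:ℝ)+1)))) / (1 - lam) := by
        gcongr
        rw [this]; nlinarith
    _ = ((D : ℝ) + 1) * ((1 - lam ^ (T / ((D : ℝ) + 1))) / (1 - lam)) := by ring
end

section
/- Let T > 0 be a real number, D a natural number, and 0 < λ < 1. If positive reals l_1, …, l_{D+1} satisfy l_1 + ⋯ + l_{D+1} = T and Σ_{i=1}^{D+1} f_λ(l_i) = (D+1) · f_λ(T/(D+1)), where f_λ(x) = (1 − λ^x)/(1 − λ), then l_1 = l_2 = ⋯ = l_{D+1} = T/(D+1). That is, equality in the Jensen bound holds only for the uniform partition. -/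
/-!
After clearing the factor `1 - λ`, the hypothesis says that Jensen's inequality for the strictly
convex function `x ↦ λ ^ x` with uniform weights `1 / (D + 1)` is an equality, which forces all
`l i` to coincide with their mean `T / (D + 1)`.
-/

open Finset Set

theorem strictConvexOn_rpow_left {b : ℝ} (hb₀ : 0 < b) (hb₁ : b ≠ 1) :
    StrictConvexOn ℝ univ fun x : ℝ => b ^ x := by
  have hlog : Real.log b ≠ 0 := Real.log_ne_zero_of_pos_of_ne_one hb₀ hb₁
  refine ⟨convex_univ, fun x _ y _ hxy s t hs ht hst => ?_⟩
  have hxy' : Real.log b * x ≠ Real.log b * y := by simpa [hlog] using hxy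
  have := strictConvexOn_exp.2 (mem_univ _) (mem_univ _) hxy' hs ht hst
  simp only [Real.rpow_def_of_pos hb₀, smul_eq_mul] at this ⊢
  convert this using 2
  ring

section UniformJensen

variable {𝕜 E β ι : Type*} [Field 𝕜] [LinearOrder 𝕜] [IsStrictOrderedRing 𝕜] [AddCommGroup E]
  [AddCommGroup β] [PartialOrder β] [IsOrderedAddMonoid β] [Module 𝕜 E] [Module 𝕜 β]
  [IsStrictOrderedModule 𝕜 β] [Fintype ι] {s : Set E} {f : E → β} {p : ι → E}

theorem StrictConvexOn.eq_average_of_sum_map_eq (hf : StrictConvexOn 𝕜 s f)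
    (hmem : ∀ i, p i ∈ s)
    (h : ∑ i, f (p i) = (Fintype.card ι : 𝕜) • f ((Fintype.card ι : 𝕜)⁻¹ • ∑ i, p i)) (j : ι) :
    p j = (Fintype.card ι : 𝕜)⁻¹ • ∑ i, p i := by
  set n : 𝕜 := (Fintype.card ι : 𝕜)
  have : Nonempty ι := ⟨j⟩
  have hn : n ≠ 0 := Nat.cast_ne_zero.2 Fintype.card_ne_zero
  have hw : ∀ i ∈ (univ : Finset ι), 0 < n⁻¹ := fun _ _ => by positivity
  have hw₁ : ∑ _i : ι, n⁻¹ = 1 := by simp [n, hn]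
  have hjensen : f (∑ i, n⁻¹ • p i) = ∑ i, n⁻¹ • f (p i) := by
    rw [← smul_sum, ← smul_sum, h, smul_smul, inv_mul_cancel₀ hn, one_smul]
  have hconst := (hf.map_sum_eq_iff_of_pos hw hw₁ fun i _ => hmem i).1 hjensen
  have hsum : ∑ i, p i = n • p j := by
    rw [sum_congr rfl fun i _ => hconst (mem_univ i) (mem_univ j), sum_const, card_univ,
      ← Nat.cast_smul_eq_nsmul 𝕜]
  rw [hsum, smul_smul, inv_mul_cancel₀ hn, one_smul]

end UniformJensen

theorem uniform_writing_equality_case_general (T : ℝ) (D : ℕ) (lam : ℝ)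
    (hlam0 : 0 < lam) (hlam1 : lam < 1)
    (l : Fin (D + 1) → ℝ)
    (hsum : ∑ i, l i = T)
    (heq : ∑ i, (1 - lam ^ (l i)) / (1 - lam)
      = ((D : ℝ) + 1) * ((1 - lam ^ (T / ((D : ℝ) + 1))) / (1 - lam))) :
    ∀ i, l i = T / ((D : ℝ) + 1) := by
  have hlam : 1 - lam ≠ 0 := by linarith
  have hpow : ∑ i, lam ^ l i = ((D : ℝ) + 1) * lam ^ (T / ((D : ℝ) + 1)) := by
    rw [← sum_div, sum_sub_distrib] at heq
    field_simp at heq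
    simp only [sum_const, card_univ, Fintype.card_fin, nsmul_eq_mul] at heq
    push_cast at heq
    linarith
  intro i
  have := (strictConvexOn_rpow_left hlam0 hlam1.ne).eq_average_of_sum_map_eq
    (fun _ => mem_univ _) (p := l) (by simpa [hsum, div_eq_inv_mul] using hpow) i
  simpa [hsum, div_eq_inv_mul] using this

/-- Equality case of the Uniform Writing optimality theorem (Theorem 3): if
`0 < λ < 1`, the positive interval lengths sum to `T`, and the Jensen bound
`∑ f_λ(l i) = (D+1) · f_λ(T/(D+1))` holds with equality, then the partition is
uniform: `l i = T/(D+1)` for all `i`. -/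
theorem uniform_writing_equality_case (T : ℝ) (hT : 0 < T) (D : ℕ) (lam : ℝ)
    (hlam0 : 0 < lam) (hlam1 : lam < 1)
    (l : Fin (D + 1) → ℝ) (hl : ∀ i, 0 < l i)
    (hsum : ∑ i, l i = T)
    (heq : ∑ i, (1 - lam ^ (l i)) / (1 - lam)
      = ((D : ℝ) + 1) * ((1 - lam ^ (T / ((D : ℝ) + 1))) / (1 - lam))) :
    ∀ i, l i = T / ((D : ℝ) + 1) :=
  uniform_writing_equality_case_general T D lam hlam0 hlam1 l hsum heq
end

section
/- Let 0 < λ < 1 and T > 0 be reals. Then the function x ↦ x · (1 − λ^{T/x}) is strictly monotonically increasing on (0, ∞), where λ^{T/x} denotes real exponentiation. Consequently, for fixed sequence length T, the maximized average contribution g_λ(T, D) = (C(D+1)/T) · (1 − λ^{T/(D+1)})/(1 − λ) (with C > 0) is strictly increasing as a function of the number of memory slots D. -/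
/-- For `0 < λ < 1` and `T > 0`, the map `x ↦ x · (1 - λ^(T/x))` is strictly
increasing on `(0, ∞)`; consequently, for any constant `C > 0`, the maximized
average contribution `g_λ(T, D) = (C(D+1)/T) · (1 - λ^(T/(D+1)))/(1 - λ)` is
strictly increasing in the number of memory slots `D` (Appendix F). -/
theorem g_lambda_increasing (lam T : ℝ) (hlam0 : 0 < lam) (hlam1 : lam < 1)
    (hT : 0 < T) :
    StrictMonoOn (fun x : ℝ => x * (1 - lam ^ (T / x))) (Set.Ioi (0 : ℝ)) ∧
    ∀ C : ℝ, 0 < C →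
      StrictMono (fun D : ℕ =>
        C * ((D : ℝ) + 1) / T * ((1 - lam ^ (T / ((D : ℝ) + 1))) / (1 - lam))) := by
  have hlog : Real.log lam < 0 := Real.log_neg hlam0 hlam1
  set c : ℝ := Real.log lam * T with hc
  have hcneg : c < 0 := mul_neg_of_neg_of_pos hlog hT
  have hfeq : (fun x : ℝ => x * (1 - lam ^ (T / x))) =
      fun x : ℝ => x * (1 - Real.exp (c * x⁻¹)) := by
    funext x
    rw [Real.rpow_def_of_pos hlam0]
    ring_nf
    rw [hc]; ring
  have hmono : StrictMonoOn (fun x : ℝ => x * (1 - lam ^ (T / x))) (Set.Ioi (0 : ℝ)) := by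
    rw [hfeq]
    have hderiv : ∀ x : ℝ, x ≠ 0 → HasDerivAt (fun x : ℝ => x * (1 - Real.exp (c * x⁻¹)))
        (1 * (1 - Real.exp (c * x⁻¹)) + x * (-(Real.exp (c * x⁻¹) * (c * -(x ^ 2)⁻¹)))) x := by
      intro x hx
      exact (hasDerivAt_id x).mul
        (((hasDerivAt_inv hx).const_mul c).exp.const_sub 1)
    apply strictMonoOn_of_deriv_pos (convex_Ioi 0)
    · have hinv : ContinuousOn (fun x : ℝ => x⁻¹) (Set.Ioi 0) :=
        continuousOn_inv₀.mono (fun x hx => ne_of_gt hx)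
      exact continuousOn_id.mul (continuousOn_const.sub
        (Real.continuous_exp.comp_continuousOn (continuousOn_const.mul hinv)))
    · intro x hx
      rw [interior_Ioi] at hx
      have hx0 : (0 : ℝ) < x := hx
      rw [(hderiv x hx0.ne').deriv]
      set w : ℝ := c * x⁻¹ with hw
      have hwneg : w < 0 := mul_neg_of_neg_of_pos hcneg (inv_pos.mpr hx0)
      have key : (1 - w) * Real.exp w < 1 := by
        have h1 : (-w) + 1 < Real.exp (-w) := Real.add_one_lt_exp (by linarith)
        have h2 : Real.exp w > 0 := Real.exp_pos w
        have := mul_lt_mul_of_pos_right h1 h2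
        rw [← Real.exp_add, neg_add_cancel, Real.exp_zero] at this
        linarith [this]
      have hexpand : 1 * (1 - Real.exp (c * x⁻¹)) + x * (-(Real.exp (c * x⁻¹) * (c * -(x ^ 2)⁻¹)))
          = 1 - (1 - w) * Real.exp w := by
        rw [hw]
        field_simp
        ring
      rw [hexpand]
      linarith
  refine ⟨hmono, fun C hC => ?_⟩
  intro D E hDE
  have h1 : ((D : ℝ) + 1) ∈ Set.Ioi (0 : ℝ) := Set.mem_Ioi.mpr (by positivity)
  have h2 : ((E : ℝ) + 1) ∈ Set.Ioi (0 : ℝ) := Set.mem_Ioi.mpr (by positivity)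
  have hlt : ((D : ℝ) + 1) < ((E : ℝ) + 1) := by exact_mod_cast by omega
  have := hmono h1 h2 hlt
  simp only at this
  have hpos : 0 < C / (T * (1 - lam)) := by
    apply div_pos hC
    apply mul_pos hT
    linarith
  have := mul_lt_mul_of_pos_left this hpos
  calc C * ((D : ℝ) + 1) / T * ((1 - lam ^ (T / ((D : ℝ) + 1))) / (1 - lam))
      = C / (T * (1 - lam)) * (((D : ℝ) + 1) * (1 - lam ^ (T / ((D : ℝ) + 1)))) := by
        field_simp
    _ < C / (T * (1 - lam)) * (((E : ℝ) + 1) * (1 - lam ^ (T / ((E : ℝ) + 1)))) := this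
    _ = C * ((E : ℝ) + 1) / T * ((1 - lam ^ (T / ((E : ℝ) + 1))) / (1 - lam)) := by
        field_simp
end
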